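/- Let α ≥ y ≥ 2 be real numbers. Then M(α;y) ≥ 10π·α^{5/2}·y^{−3/2}·e^{−πα/y}. -/

import Mathlib

/-!
Put `t = α / y ≥ 1`. Jacobi's identity `ϑ(1/t;0) = √t·ϑ(t;0)` and its derivative in `t` turn
`M₁ + M₂` into `4√2·y t²√t·(2ϑ_X(2t;0) − ϑ_X(t;0))`, and `y t²√t = α^{5/2} y^{−3/2}`.
Termwise, `2ϑ_X(2t;0) − ϑ_X(t;0) = 2π ∑ n² qₙ(1 − 2qₙ)` with `qₙ = e^{−πn²t} ≤ e^{−π} < 1/20`,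
so the first term alone gives `M₁ + M₂ ≥ (36√2/5)·π α^{5/2} y^{−3/2} e^{−πα/y}`, and
`36√2/5 > 10 + 1/6`. The remaining terms `M₃, M₄` are `O(α³ e^{−παy})` by `|ϑ(X;1/2)| ≤ 1` and
`|ϑ_X(X;Y)| ≤ 8/(πX²)`, and `e^{−παy} ≤ e^{−πα/y} e^{−9α/2}` makes them smaller than the
margin `(π/6)·α^{5/2} y^{−3/2} e^{−πα/y}`.
-/

open Real

/-- The one-dimensional theta function `ϑ(X;Y) = 1 + 2 Σ_{n≥1} e^{−πn²X} cos(2πnY)`. -/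
noncomputable def vtheta (X Y : ℝ) : ℝ :=
  1 + 2 * ∑' n : ℕ, Real.exp (-π * ((n : ℝ) + 1) ^ 2 * X) * Real.cos (2 * π * ((n : ℝ) + 1) * Y)

/-- `ϑ_Y`, the partial derivative of `ϑ` in `Y`. -/
noncomputable def vthetaY (X Y : ℝ) : ℝ := deriv (fun y => vtheta X y) Y

/-- `ϑ_X`, the partial derivative of `ϑ` in `X`. -/
noncomputable def vthetaX (X Y : ℝ) : ℝ := deriv (fun x => vtheta x Y) X

/-- `ϑ_XY`, the mixed second partial derivative of `ϑ`. -/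
noncomputable def vthetaXY (X Y : ℝ) : ℝ := deriv (fun x => vthetaY x Y) X

/-- `M₁(α;y) = 2√2·α·ϑ(y/α;0) − 2α·ϑ(y/(2α);0)`. -/
noncomputable def M1 (α y : ℝ) : ℝ :=
  2 * Real.sqrt 2 * α * vtheta (y / α) 0 - 2 * α * vtheta (y / (2 * α)) 0

/-- `M₂(α;y) = 4√2·y·ϑ_X(y/α;0) − 2y·ϑ_X(y/(2α);0)`. -/
noncomputable def M2 (α y : ℝ) : ℝ :=
  4 * Real.sqrt 2 * y * vthetaX (y / α) 0 - 2 * y * vthetaX (y / (2 * α)) 0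

/-- `M₃(α;y) = 4√2·α(1+2παy)e^{−παy}ϑ(y/α;1/2) − 4α(1+4παy)e^{−2παy}ϑ(y/(2α);1/2)`. -/
noncomputable def M3 (α y : ℝ) : ℝ :=
  4 * Real.sqrt 2 * α * (1 + 2 * π * α * y) * Real.exp (-π * α * y) * vtheta (y / α) (1 / 2) -
    4 * α * (1 + 4 * π * α * y) * Real.exp (-2 * π * α * y) * vtheta (y / (2 * α)) (1 / 2)

/-- `M₄(α;y) = 8√2·y·e^{−παy}·ϑ_X(y/α;1/2) − 4y·e^{−2παy}·ϑ_X(y/(2α);1/2)`. -/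
noncomputable def M4 (α y : ℝ) : ℝ :=
  8 * Real.sqrt 2 * y * Real.exp (-π * α * y) * vthetaX (y / α) (1 / 2) -
    4 * y * Real.exp (-2 * π * α * y) * vthetaX (y / (2 * α)) (1 / 2)

/-- `M = M₁ + M₂ + M₃ + M₄`. -/
noncomputable def Mfun (α y : ℝ) : ℝ := M1 α y + M2 α y + M3 α y + M4 α y

noncomputable def thetaTerm (X Y : ℝ) (n : ℕ) : ℝ :=
  exp (-π * ((n : ℝ) + 1) ^ 2 * X) * cos (2 * π * ((n : ℝ) + 1) * Y)

lemma vtheta_eq_tsum (X Y : ℝ) : vtheta X Y = 1 + 2 * ∑' n, thetaTerm X Y n := rfl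

section ExpSums

lemma exp_neg_mul_succ_eq (c : ℝ) (n : ℕ) :
    exp (-(c * ((n : ℝ) + 1))) = exp (-c) * exp (-c) ^ n := by
  rw [← exp_nat_mul, ← exp_add]
  ring_nf

variable {c : ℝ}

lemma summable_exp_neg_mul_succ (hc : 0 < c) :
    Summable fun n : ℕ => exp (-(c * ((n : ℝ) + 1))) := by
  simp_rw [exp_neg_mul_succ_eq]
  exact (summable_geometric_of_lt_one (exp_nonneg _) (exp_lt_one_iff.mpr (by linarith))).mul_left _

lemma tsum_exp_neg_mul_succ_le (hc : 0 < c) :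
    ∑' n : ℕ, exp (-(c * ((n : ℝ) + 1))) ≤ 1 / c := by
  have hc1 : c + 1 ≤ exp c := add_one_le_exp c
  simp_rw [exp_neg_mul_succ_eq]
  rw [tsum_mul_left, tsum_geometric_of_lt_one (exp_nonneg _) (exp_lt_one_iff.mpr (by linarith)),
    show exp (-c) * (1 - exp (-c))⁻¹ = 1 / (exp c - 1) by
      rw [exp_neg]; field_simp [(by linarith : exp c - 1 ≠ 0)]]
  exact one_div_le_one_div_of_le hc (by linarith)

lemma sq_mul_exp_neg_mul_sq_le (hc : 0 < c) {m : ℝ} (hm : 1 ≤ m) :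
    m ^ 2 * exp (-(c * m ^ 2)) ≤ 2 / c * exp (-(c / 2 * m)) := by
  have hu : c * m ^ 2 / 2 + 1 ≤ exp (c * m ^ 2 / 2) := add_one_le_exp _
  have h1 : m ^ 2 * exp (-(c * m ^ 2 / 2)) ≤ 2 / c := by
    rw [exp_neg, ← div_eq_mul_inv, div_le_div_iff₀ (exp_pos _) hc]
    nlinarith
  have h2 : exp (-(c * m ^ 2 / 2)) ≤ exp (-(c / 2 * m)) :=
    exp_le_exp.mpr (by nlinarith [mul_le_mul_of_nonneg_left hm (by positivity : 0 ≤ c * m)])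
  calc m ^ 2 * exp (-(c * m ^ 2))
      = m ^ 2 * exp (-(c * m ^ 2 / 2)) * exp (-(c * m ^ 2 / 2)) := by
        rw [mul_assoc, ← exp_add]; ring_nf
    _ ≤ 2 / c * exp (-(c / 2 * m)) := mul_le_mul h1 h2 (exp_pos _).le (by positivity)

lemma sq_mul_exp_neg_mul_sq_le_succ (hc : 0 < c) (n : ℕ) :
    ((n : ℝ) + 1) ^ 2 * exp (-(c * ((n : ℝ) + 1) ^ 2)) ≤ 2 / c * exp (-(c / 2 * ((n : ℝ) + 1))) :=
  sq_mul_exp_neg_mul_sq_le hc (by simp)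

lemma summable_sq_mul_exp_neg_mul_sq (hc : 0 < c) :
    Summable fun n : ℕ => ((n : ℝ) + 1) ^ 2 * exp (-(c * ((n : ℝ) + 1) ^ 2)) :=
  ((summable_exp_neg_mul_succ (half_pos hc)).mul_left (2 / c)).of_nonneg_of_le
    (fun _ => by positivity) (sq_mul_exp_neg_mul_sq_le_succ hc)

lemma tsum_sq_mul_exp_neg_mul_sq_le (hc : 0 < c) :
    ∑' n : ℕ, ((n : ℝ) + 1) ^ 2 * exp (-(c * ((n : ℝ) + 1) ^ 2)) ≤ 4 / c ^ 2 :=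
  calc ∑' n : ℕ, ((n : ℝ) + 1) ^ 2 * exp (-(c * ((n : ℝ) + 1) ^ 2))
      ≤ ∑' n : ℕ, 2 / c * exp (-(c / 2 * ((n : ℝ) + 1))) :=
        (summable_sq_mul_exp_neg_mul_sq hc).tsum_le_tsum (sq_mul_exp_neg_mul_sq_le_succ hc)
          ((summable_exp_neg_mul_succ (half_pos hc)).mul_left _)
    _ ≤ 2 / c * (1 / (c / 2)) := by
        rw [tsum_mul_left]
        gcongr
        exact tsum_exp_neg_mul_succ_le (half_pos hc)
    _ = 4 / c ^ 2 := by field_simp; ring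

end ExpSums

section ThetaSeries

variable {X : ℝ}

lemma abs_thetaTerm_le (X Y : ℝ) (n : ℕ) :
    |thetaTerm X Y n| ≤ exp (-(π * X * ((n : ℝ) + 1) ^ 2)) := by
  rw [thetaTerm, abs_mul, abs_exp]
  calc exp (-π * ((n : ℝ) + 1) ^ 2 * X) * |cos (2 * π * ((n : ℝ) + 1) * Y)|
      ≤ exp (-π * ((n : ℝ) + 1) ^ 2 * X) := mul_le_of_le_one_right (exp_pos _).le (abs_cos_le_one _)
    _ = exp (-(π * X * ((n : ℝ) + 1) ^ 2)) := by ring_nf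

lemma norm_mul_thetaTerm_le (X Y : ℝ) (n : ℕ) :
    ‖-π * ((n : ℝ) + 1) ^ 2 * thetaTerm X Y n‖ ≤
      π * (((n : ℝ) + 1) ^ 2 * exp (-(π * X * ((n : ℝ) + 1) ^ 2))) := by
  rw [norm_mul, norm_mul, norm_neg, Real.norm_eq_abs, Real.norm_eq_abs, Real.norm_eq_abs,
    abs_of_pos pi_pos, abs_of_nonneg (sq_nonneg _), ← mul_assoc]
  exact mul_le_mul_of_nonneg_left (abs_thetaTerm_le X Y n) (by positivity)

lemma summable_thetaTerm (hX : 0 < X) (Y : ℝ) : Summable (thetaTerm X Y) :=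
  (summable_sq_mul_exp_neg_mul_sq (mul_pos pi_pos hX)).of_norm_bounded fun n =>
    (abs_thetaTerm_le X Y n).trans (le_mul_of_one_le_left (exp_pos _).le (one_le_pow₀ (by simp)))

lemma hasDerivAt_thetaTerm (Y : ℝ) (n : ℕ) (x : ℝ) :
    HasDerivAt (fun x => thetaTerm x Y n) (-π * ((n : ℝ) + 1) ^ 2 * thetaTerm x Y n) x :=
  (((hasDerivAt_id x).const_mul (-π * ((n : ℝ) + 1) ^ 2)).exp.mul_const _).congr_deriv
    (by simp only [thetaTerm, id]; ring)

lemma hasDerivAt_vtheta_tsum (Y : ℝ) (hX : 0 < X) :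
    HasDerivAt (fun x => vtheta x Y)
      (2 * ∑' n : ℕ, -π * ((n : ℝ) + 1) ^ 2 * thetaTerm X Y n) X := by
  have hbound (n : ℕ) (x : ℝ) (hx : x ∈ Set.Ioi (X / 2)) :
      ‖-π * ((n : ℝ) + 1) ^ 2 * thetaTerm x Y n‖ ≤
        π * (((n : ℝ) + 1) ^ 2 * exp (-(π * (X / 2) * ((n : ℝ) + 1) ^ 2))) := by
    refine (norm_mul_thetaTerm_le x Y n).trans ?_
    gcongr
    exact hx.le
  exact ((hasDerivAt_tsum_of_isPreconnected
    ((summable_sq_mul_exp_neg_mul_sq (mul_pos pi_pos (half_pos hX))).mul_left π) isOpen_Ioi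
    isPreconnected_Ioi (fun n x _ => hasDerivAt_thetaTerm Y n x) hbound
    (Set.mem_Ioi.mpr (half_lt_self hX)) (summable_thetaTerm hX Y)
    (Set.mem_Ioi.mpr (half_lt_self hX))).const_mul 2).const_add 1

lemma vthetaX_eq_tsum (Y : ℝ) (hX : 0 < X) :
    vthetaX X Y = 2 * ∑' n : ℕ, -π * ((n : ℝ) + 1) ^ 2 * thetaTerm X Y n :=
  (hasDerivAt_vtheta_tsum Y hX).deriv

lemma hasDerivAt_vtheta (Y : ℝ) (hX : 0 < X) : HasDerivAt (fun x => vtheta x Y) (vthetaX X Y) X :=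
  (hasDerivAt_vtheta_tsum Y hX).differentiableAt.hasDerivAt

lemma abs_vthetaX_le (hX : 0 < X) (Y : ℝ) : |vthetaX X Y| ≤ 8 / (π * X ^ 2) := by
  have hc : 0 < π * X := mul_pos pi_pos hX
  rw [vthetaX_eq_tsum Y hX, abs_mul, abs_two]
  calc 2 * |∑' n : ℕ, -π * ((n : ℝ) + 1) ^ 2 * thetaTerm X Y n|
      ≤ 2 * (π * ∑' n : ℕ, ((n : ℝ) + 1) ^ 2 * exp (-(π * X * ((n : ℝ) + 1) ^ 2))) := by
        rw [← tsum_mul_left]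
        gcongr
        exact tsum_of_norm_bounded ((summable_sq_mul_exp_neg_mul_sq hc).mul_left π).hasSum
          (norm_mul_thetaTerm_le X Y)
    _ ≤ 2 * (π * (4 / (π * X) ^ 2)) := by
        gcongr
        exact tsum_sq_mul_exp_neg_mul_sq_le hc
    _ = 8 / (π * X ^ 2) := by field_simp; ring

lemma thetaTerm_half (X : ℝ) (n : ℕ) :
    thetaTerm X (1 / 2) n = -((-1) ^ n * exp (-π * ((n : ℝ) + 1) ^ 2 * X)) := by
  have h : 2 * π * ((n : ℝ) + 1) * (1 / 2) = ((n + 1 : ℕ) : ℝ) * π := by push_cast; ring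
  rw [thetaTerm, h, cos_nat_mul_pi, pow_succ]
  ring

-- `ϑ(X;1/2) = 1 - 2 S` where the alternating sum `S = ∑ (-1)ⁿ e^{-π(n+1)²X}` lies in `[0, 1]`.
lemma abs_vtheta_half_le (hX : 0 < X) : |vtheta X (1 / 2)| ≤ 1 := by
  set f : ℕ → ℝ := fun n => exp (-π * ((n : ℝ) + 1) ^ 2 * X)
  have hfs : Summable f := (summable_thetaTerm hX 0).congr fun n => by simp [thetaTerm, f]
  have hfa : Antitone f := antitone_nat_of_succ_le fun n => exp_le_exp.mpr <| by
    push_cast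
    nlinarith [mul_pos pi_pos hX, (n.cast_nonneg : (0 : ℝ) ≤ n)]
  have hlim := hfs.tendsto_alternating_series_tsum
  have hlow : 0 ≤ ∑' n, (-1) ^ n * f n := by
    simpa using hfa.alternating_series_le_tendsto hlim 0
  have hupp : ∑' n, (-1) ^ n * f n ≤ 1 := by
    refine (hfa.tendsto_le_alternating_series hlim 0).trans ?_
    simpa [f] using mul_nonneg pi_pos.le hX.le
  rw [vtheta_eq_tsum, tsum_congr (thetaTerm_half X), tsum_neg, abs_le]
  constructor <;> linarith

lemma vthetaX_zero_eq (hX : 0 < X) :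
    vthetaX X 0 = -(2 * π) * ∑' n : ℕ, ((n : ℝ) + 1) ^ 2 * exp (-(π * X * ((n : ℝ) + 1) ^ 2)) := by
  rw [vthetaX_eq_tsum 0 hX, ← tsum_mul_left, ← tsum_mul_left]
  refine tsum_congr fun n => ?_
  simp only [thetaTerm, mul_zero, cos_zero]
  ring_nf

end ThetaSeries

lemma pow_le_exp_natCast (n : ℕ) : (2.7182818283 : ℝ) ^ n ≤ exp n := by
  rw [← exp_one_pow]
  exact pow_le_pow_left₀ (by norm_num) exp_one_gt_d9.le n

lemma exp_neg_pi_le : exp (-π) ≤ 1 / 20 := by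
  have h3 : (20 : ℝ) ≤ exp 3 := by
    have := pow_le_exp_natCast 3
    norm_num at this
    exact le_trans (by norm_num) this
  rw [exp_neg, inv_eq_one_div]
  exact one_div_le_one_div_of_le (by norm_num) (h3.trans (exp_le_exp.mpr pi_gt_three.le))

lemma two_mul_vthetaX_two_mul_sub_vthetaX_ge {t : ℝ} (ht : 1 ≤ t) :
    9 * π / 5 * exp (-(π * t)) ≤ 2 * vthetaX (2 * t) 0 - vthetaX t 0 := by
  have ht0 : 0 < t := by linarith
  have hq (n : ℕ) : exp (-(π * t * ((n : ℝ) + 1) ^ 2)) ≤ 1 / 20 := by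
    refine le_trans (exp_le_exp.mpr ?_) exp_neg_pi_le
    have : 1 ≤ t * ((n : ℝ) + 1) ^ 2 := one_le_mul_of_one_le_of_one_le ht (one_le_pow₀ (by simp))
    nlinarith [pi_pos]
  have hsum := (summable_sq_mul_exp_neg_mul_sq (mul_pos pi_pos ht0)).hasSum.sub
    ((summable_sq_mul_exp_neg_mul_sq (mul_pos pi_pos (by linarith : 0 < 2 * t))).hasSum.mul_left 2)
  have hterm (n : ℕ) : ((n : ℝ) + 1) ^ 2 * exp (-(π * t * ((n : ℝ) + 1) ^ 2)) -
      2 * (((n : ℝ) + 1) ^ 2 * exp (-(π * (2 * t) * ((n : ℝ) + 1) ^ 2))) =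
      ((n : ℝ) + 1) ^ 2 * exp (-(π * t * ((n : ℝ) + 1) ^ 2)) *
        (1 - 2 * exp (-(π * t * ((n : ℝ) + 1) ^ 2))) := by
    rw [show exp (-(π * (2 * t) * ((n : ℝ) + 1) ^ 2)) = exp (-(π * t * ((n : ℝ) + 1) ^ 2)) ^ 2 by
      rw [← exp_nat_mul]; ring_nf]
    ring
  simp only [hterm] at hsum
  -- every term is nonnegative since `exp (-(π t (n+1)²)) ≤ 1/20`, so the sum dominates the first
  have hfirst := le_hasSum hsum 0 fun n _ => mul_nonneg (by positivity) (by linarith [hq n])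
  have hE : 9 / 10 * exp (-(π * t)) ≤ exp (-(π * t)) * (1 - 2 * exp (-(π * t))) := by
    nlinarith [(by simpa using hq 0 : exp (-(π * t)) ≤ 1 / 20), exp_pos (-(π * t))]
  simp only [Nat.cast_zero, zero_add, one_pow, one_mul, mul_one] at hfirst
  rw [vthetaX_zero_eq (by linarith), vthetaX_zero_eq ht0]
  linear_combination (2 * π) * (hE.trans hfirst)

section Jacobi

variable {X : ℝ}

lemma vtheta_zero_eq_jacobiTheta (hX : 0 < X) :
    (vtheta X 0 : ℂ) = jacobiTheta (X * Complex.I) := by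
  rw [jacobiTheta_eq_tsum_nat (by simpa using hX), vtheta]
  push_cast
  congr 2
  refine tsum_congr fun n => ?_
  rw [mul_zero, Complex.cos_zero, mul_one]
  congr 1
  ring_nf
  rw [Complex.I_sq]
  ring

lemma vtheta_inv_zero (hX : 0 < X) : vtheta X⁻¹ 0 = √X * vtheta X 0 := by
  let τ : UpperHalfPlane := ⟨X * Complex.I, by simpa using hX⟩
  have hS : ((ModularGroup.S • τ : UpperHalfPlane) : ℂ) = (X⁻¹ : ℝ) * Complex.I := by
    rw [UpperHalfPlane.modular_S_smul, UpperHalfPlane.coe_mk]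
    change (-((X : ℂ) * Complex.I))⁻¹ = _
    rw [inv_neg, mul_inv, Complex.inv_I]
    push_cast
    ring
  have hpow : (-Complex.I * τ) ^ (1 / 2 : ℂ) = (√X : ℂ) := by
    rw [show -Complex.I * τ = (X : ℂ) by
      change -Complex.I * (X * Complex.I) = _; ring_nf; simp,
      show (1 / 2 : ℂ) = ((1 / 2 : ℝ) : ℂ) by norm_num, ← Complex.ofReal_cpow hX.le, sqrt_eq_rpow]
  have h := jacobiTheta_S_smul τ
  rw [hS, hpow] at h
  have h' : ((vtheta X⁻¹ 0 : ℝ) : ℂ) = ((√X * vtheta X 0 : ℝ) : ℂ) := by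
    rw [vtheta_zero_eq_jacobiTheta (inv_pos.mpr hX), h, Complex.ofReal_mul,
      vtheta_zero_eq_jacobiTheta hX]
  exact_mod_cast h'

lemma vthetaX_inv_zero {t : ℝ} (ht : 0 < t) :
    vthetaX t⁻¹ 0 = -(t * √t / 2) * vtheta t 0 - t ^ 2 * √t * vthetaX t 0 := by
  have hlhs : HasDerivAt (fun x => vtheta x⁻¹ 0) (vthetaX t⁻¹ 0 * -(t ^ 2)⁻¹) t :=
    (hasDerivAt_vtheta 0 (inv_pos.mpr ht)).comp t (hasDerivAt_inv ht.ne')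
  have hrhs : HasDerivAt (fun x => √x * vtheta x 0)
      (1 / (2 * √t) * vtheta t 0 + √t * vthetaX t 0) t :=
    (hasDerivAt_sqrt ht.ne').mul (hasDerivAt_vtheta 0 ht)
  have h := hlhs.unique (hrhs.congr_of_eventuallyEq
    (Filter.eventually_of_mem (Ioi_mem_nhds ht) fun x hx => vtheta_inv_zero hx))
  have hs : √t ^ 2 = t := sq_sqrt ht.le
  rw [show vthetaX t⁻¹ 0 = -t ^ 2 * (1 / (2 * √t) * vtheta t 0 + √t * vthetaX t 0) by
    rw [← h]; field_simp]
  field_simp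
  linear_combination vtheta t 0 * hs

end Jacobi

lemma M1_add_M2_eq {y t : ℝ} (hy : 0 < y) (ht : 0 < t) :
    M1 (y * t) y + M2 (y * t) y =
      4 * √2 * (y * t ^ 2 * √t) * (2 * vthetaX (2 * t) 0 - vthetaX t 0) := by
  have h1 : y / (y * t) = t⁻¹ := by field_simp
  have h2 : y / (2 * (y * t)) = (2 * t)⁻¹ := by field_simp
  rw [M1, M2, h1, h2, vtheta_inv_zero ht, vtheta_inv_zero (by positivity), vthetaX_inv_zero ht,
    vthetaX_inv_zero (by positivity), sqrt_mul zero_le_two]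
  ring

lemma mul_rpow_five_halves_mul_rpow_neg_three_halves {y t : ℝ} (hy : 0 < y) (ht : 0 < t) :
    (y * t) ^ ((5 : ℝ) / 2) * y ^ (-(3 : ℝ) / 2) = y * t ^ 2 * √t := by
  rw [mul_rpow hy.le ht.le, mul_right_comm, ← rpow_add hy, sqrt_eq_rpow, mul_assoc,
    ← rpow_natCast, ← rpow_add ht]
  norm_num

lemma M1_add_M2_ge {α y : ℝ} (hy : 0 < y) (hyα : y ≤ α) :
    (10 + 1 / 6) * π * α ^ ((5 : ℝ) / 2) * y ^ (-(3 : ℝ) / 2) * exp (-π * α / y) ≤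
      M1 α y + M2 α y := by
  obtain ⟨t, ht, rfl⟩ : ∃ t, 1 ≤ t ∧ α = y * t :=
    ⟨α / y, (one_le_div hy).mpr hyα, by field_simp⟩
  have ht0 : 0 < t := by linarith
  have hsqrt2 : 1.4142 ≤ √2 := le_sqrt_of_sq_le (by norm_num)
  rw [M1_add_M2_eq hy ht0, mul_assoc ((10 + 1 / 6) * π),
    mul_rpow_five_halves_mul_rpow_neg_three_halves hy ht0,
    show -π * (y * t) / y = -(π * t) by field_simp]
  calc (10 + 1 / 6) * π * (y * t ^ 2 * √t) * exp (-(π * t))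
      ≤ 4 * √2 * (y * t ^ 2 * √t) * (9 * π / 5 * exp (-(π * t))) := by
        have : 0 ≤ π * (y * t ^ 2 * √t) * exp (-(π * t)) := by positivity
        nlinarith
    _ ≤ 4 * √2 * (y * t ^ 2 * √t) * (2 * vthetaX (2 * t) 0 - vthetaX t 0) := by
        gcongr
        exact two_mul_vthetaX_two_mul_sub_vthetaX_ge ht

section ErrorTerms

variable {α y : ℝ}

lemma exp_neg_two_pi_mul_le (hα : 0 < α) (hy : 0 < y) :
    exp (-2 * π * α * y) ≤ exp (-π * α * y) :=
  exp_le_exp.mpr (by nlinarith [mul_pos (mul_pos pi_pos hα) hy])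

lemma abs_M3_le (hα : 0 < α) (hy : 0 < y) (hαy : 4 ≤ α * y) :
    |M3 α y| ≤ 100 * α ^ 2 * y * exp (-π * α * y) := by
  have hB := exp_neg_two_pi_mul_le hα hy
  have hs := sqrt_two_lt_three_halves
  have hπ := pi_lt_d2
  have b1 : |4 * √2 * α * (1 + 2 * π * α * y) * exp (-π * α * y) * vtheta (y / α) (1 / 2)| ≤
      4 * √2 * α * (1 + 2 * π * α * y) * exp (-π * α * y) := by
    rw [abs_mul, abs_of_nonneg (by positivity)]
    exact mul_le_of_le_one_right (by positivity) (abs_vtheta_half_le (div_pos hy hα))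
  have b2 : |4 * α * (1 + 4 * π * α * y) * exp (-2 * π * α * y) * vtheta (y / (2 * α)) (1 / 2)| ≤
      4 * α * (1 + 4 * π * α * y) * exp (-π * α * y) := by
    rw [abs_mul, abs_of_nonneg (by positivity)]
    refine (mul_le_of_le_one_right (by positivity) ?_).trans (by gcongr)
    exact abs_vtheta_half_le (div_pos hy (mul_pos two_pos hα))
  have hcoef : (4 * √2 + 4) + π * (α * y) * (8 * √2 + 16) ≤ 100 * (α * y) := by
    have : π * (8 * √2 + 16) ≤ 3.15 * 28 :=
      mul_le_mul hπ.le (by linarith) (by positivity) (by norm_num)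
    nlinarith [mul_le_mul_of_nonneg_right this (by linarith : 0 ≤ α * y)]
  calc |M3 α y| ≤ 4 * √2 * α * (1 + 2 * π * α * y) * exp (-π * α * y) +
        4 * α * (1 + 4 * π * α * y) * exp (-π * α * y) :=
        (abs_sub _ _).trans (add_le_add b1 b2)
    _ = α * ((4 * √2 + 4) + π * (α * y) * (8 * √2 + 16)) * exp (-π * α * y) := by ring
    _ ≤ α * (100 * (α * y)) * exp (-π * α * y) := by gcongr
    _ = 100 * α ^ 2 * y * exp (-π * α * y) := by ring

lemma abs_M4_le (hα : 0 < α) (hy : 0 < y) :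
    |M4 α y| ≤ 180 * α ^ 2 / y * exp (-π * α * y) := by
  have hB := exp_neg_two_pi_mul_le hα hy
  have hs := sqrt_two_lt_three_halves
  have hD1 : |vthetaX (y / α) (1 / 2)| ≤ 32 * α ^ 2 / (π * y ^ 2) := by
    calc |vthetaX (y / α) (1 / 2)| ≤ 8 / (π * (y / α) ^ 2) := abs_vthetaX_le (div_pos hy hα) _
      _ = 8 * α ^ 2 / (π * y ^ 2) := by field_simp
      _ ≤ 32 * α ^ 2 / (π * y ^ 2) := by gcongr; norm_num
  have hD2 : |vthetaX (y / (2 * α)) (1 / 2)| ≤ 32 * α ^ 2 / (π * y ^ 2) := by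
    refine (abs_vthetaX_le (div_pos hy (mul_pos two_pos hα)) _).trans_eq ?_
    field_simp
    ring
  have b1 : |8 * √2 * y * exp (-π * α * y) * vthetaX (y / α) (1 / 2)| ≤
      8 * √2 * y * exp (-π * α * y) * (32 * α ^ 2 / (π * y ^ 2)) := by
    rw [abs_mul, abs_of_nonneg (by positivity)]
    gcongr
  have b2 : |4 * y * exp (-2 * π * α * y) * vthetaX (y / (2 * α)) (1 / 2)| ≤
      4 * y * exp (-π * α * y) * (32 * α ^ 2 / (π * y ^ 2)) := by
    rw [abs_mul, abs_of_nonneg (by positivity)]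
    gcongr
  calc |M4 α y| ≤ 8 * √2 * y * exp (-π * α * y) * (32 * α ^ 2 / (π * y ^ 2)) +
        4 * y * exp (-π * α * y) * (32 * α ^ 2 / (π * y ^ 2)) :=
        (abs_sub _ _).trans (add_le_add b1 b2)
    _ = (8 * √2 + 4) * 32 / π * (α ^ 2 / y) * exp (-π * α * y) := by field_simp
    _ ≤ 180 * (α ^ 2 / y) * exp (-π * α * y) := by
        gcongr
        rw [div_le_iff₀ pi_pos]
        nlinarith [pi_gt_three]
    _ = 180 * α ^ 2 / y * exp (-π * α * y) := by ring

lemma abs_M3_add_M4_le (hy : 2 ≤ y) (hyα : y ≤ α) :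
    |M3 α y + M4 α y| ≤ 150 * α ^ 3 * exp (-π * α * y) := by
  have hy0 : 0 < y := by linarith
  have hα0 : 0 < α := by linarith
  have hαy : 4 ≤ α * y := by nlinarith
  have h3 : 100 * α ^ 2 * y ≤ 100 * α ^ 3 := by
    nlinarith [mul_le_mul_of_nonneg_left hyα (sq_nonneg α)]
  have h4 : 180 * α ^ 2 / y ≤ 50 * α ^ 3 := by
    rw [div_le_iff₀ hy0]
    nlinarith [mul_le_mul_of_nonneg_left hαy (sq_nonneg α)]
  calc |M3 α y + M4 α y| ≤ 100 * α ^ 2 * y * exp (-π * α * y) +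
        180 * α ^ 2 / y * exp (-π * α * y) :=
        (abs_add_le _ _).trans (add_le_add (abs_M3_le hα0 hy0 hαy) (abs_M4_le hα0 hy0))
    _ ≤ 100 * α ^ 3 * exp (-π * α * y) + 50 * α ^ 3 * exp (-π * α * y) :=
        add_le_add (mul_le_mul_of_nonneg_right h3 (exp_pos _).le)
          (mul_le_mul_of_nonneg_right h4 (exp_pos _).le)
    _ = 150 * α ^ 3 * exp (-π * α * y) := by ring

end ErrorTerms

section Numerics

variable {α y : ℝ}

lemma exp_neg_pi_mul_mul_le (hα : 0 ≤ α) (hy : 2 ≤ y) :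
    exp (-π * α * y) ≤ exp (-π * α / y) * exp (-(9 / 2 * α)) := by
  rw [← exp_add]
  refine exp_le_exp.mpr ?_
  have h1 : π * α / y ≤ π * α / 2 := div_le_div_of_nonneg_left (by positivity) two_pos hy
  have h2 : 9 / 2 ≤ π * (y - 1 / 2) := by nlinarith [pi_gt_three]
  rw [neg_mul, neg_mul, neg_div]
  nlinarith [mul_le_mul_of_nonneg_left h2 hα]

lemma sq_mul_exp_neg_le (hα : 2 ≤ α) : α ^ 2 * exp (-(9 / 2 * α)) ≤ 1 / 500 := by
  have h7 : (1000 : ℝ) ≤ exp (7 / 2 * α) := by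
    have := pow_le_exp_natCast 7
    norm_num at this
    exact le_trans (by norm_num) (this.trans (exp_le_exp.mpr (by linarith)))
  have hq : α ^ 2 / 2 ≤ exp α := by
    linarith [quadratic_le_exp_of_nonneg (by linarith : 0 ≤ α)]
  rw [exp_neg, ← div_eq_mul_inv, div_le_div_iff₀ (exp_pos _) (by norm_num),
    show 9 / 2 * α = α + 7 / 2 * α by ring, exp_add]
  nlinarith [mul_le_mul hq h7 (by norm_num) (exp_pos _).le]

lemma cube_mul_exp_neg_pi_mul_le (hy : 2 ≤ y) (hyα : y ≤ α) :
    150 * α ^ 3 * exp (-π * α * y) ≤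
      π / 6 * α ^ ((5 : ℝ) / 2) * y ^ (-(3 : ℝ) / 2) * exp (-π * α / y) := by
  have hy0 : 0 < y := by linarith
  have hα2 : 2 ≤ α := hy.trans hyα
  have hw : α ≤ α ^ ((5 : ℝ) / 2) * y ^ (-(3 : ℝ) / 2) := by
    obtain ⟨t, ht, rfl⟩ : ∃ t, 1 ≤ t ∧ α = y * t :=
      ⟨α / y, (one_le_div hy0).mpr hyα, by field_simp⟩
    rw [mul_rpow_five_halves_mul_rpow_neg_three_halves hy0 (by linarith)]
    have hst : 1 ≤ √t := one_le_sqrt.mpr ht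
    nlinarith [mul_le_mul ht hst zero_le_one (by linarith), mul_pos hy0 (by linarith : 0 < t)]
  calc 150 * α ^ 3 * exp (-π * α * y)
      ≤ 150 * α ^ 3 * (exp (-π * α / y) * exp (-(9 / 2 * α))) := by
        gcongr
        exact exp_neg_pi_mul_mul_le (by linarith) hy
    _ = 150 * α * (α ^ 2 * exp (-(9 / 2 * α))) * exp (-π * α / y) := by ring
    _ ≤ 150 * α * (1 / 500) * exp (-π * α / y) := by
        gcongr
        exact sq_mul_exp_neg_le hα2
    _ ≤ π / 6 * α ^ ((5 : ℝ) / 2) * y ^ (-(3 : ℝ) / 2) * exp (-π * α / y) := by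
        refine mul_le_mul_of_nonneg_right ?_ (exp_pos _).le
        nlinarith [mul_le_mul_of_nonneg_left hw (by positivity : 0 ≤ π / 6),
          mul_nonneg (sub_nonneg.mpr pi_gt_three.le) (by linarith : 0 ≤ α)]

end Numerics

/-- For `α ≥ y ≥ 2`, `M(α;y) ≥ 10π·α^{5/2}·y^{−3/2}·e^{−πα/y}`. -/
theorem M_lower_bound_case2 (α y : ℝ) (hy : 2 ≤ y) (hα : y ≤ α) :
    Mfun α y ≥ 10 * π * α ^ ((5 : ℝ) / 2) * y ^ (-(3 : ℝ) / 2) * Real.exp (-π * α / y) := by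
  have hmain := M1_add_M2_ge (by linarith) hα
  have herr := abs_M3_add_M4_le hy hα
  have hcmp := cube_mul_exp_neg_pi_mul_le hy hα
  rw [Mfun, ge_iff_le]
  linarith [neg_abs_le (M3 α y + M4 α y)]
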